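/- arXiv:1902.06303 — 8 statements merged into one kernel-verified Lean document; each statement's English description precedes it below -/
import Mathlib

section
/- If an item response model is ordinal according to the paired categories concept (for every pair of categories s < r the ratio π_r(θ)/π_s(θ) is a strictly increasing function of θ), then it is ordinal according to the conditional concept (for every r = 1,…,k the conditional probability P(Y ≥ r | Y ≥ r−1, θ) = (∑_{j=r}^{k} π_j(θ))/(∑_{j=r−1}^{k} π_j(θ)) is a strictly increasing function of θ). -/
/-!
Write `T_r = ∑_{j ≥ r} π_j`. The conditional probability is `T_r / (π_{r-1} + T_r)`, an increasing
function of `T_r / π_{r-1} = ∑_{j ≥ r} π_j / π_{r-1}`, and each summand of the latter is strictly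
increasing by the paired-categories assumption.
-/

open Finset

theorem strictMono_finset_sum {ι α β : Type*} [Preorder α] [AddCommMonoid β] [PartialOrder β]
    [IsOrderedCancelAddMonoid β] {s : Finset ι} {f : ι → α → β} (hs : s.Nonempty)
    (hf : ∀ i ∈ s, StrictMono (f i)) : StrictMono fun x => ∑ i ∈ s, f i x :=
  fun _ _ hxy => sum_lt_sum_of_nonempty hs fun i hi => hf i hi hxy

theorem strictMono_div_add_of_strictMono_div {α : Type*} [Preorder α] {a b : α → ℝ}
    (ha : ∀ x, 0 < a x) (hb : ∀ x, 0 ≤ b x) (h : StrictMono fun x => b x / a x) :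
    StrictMono fun x => b x / (a x + b x) := by
  intro x y hxy
  have hlt := (div_lt_div_iff₀ (ha x) (ha y)).mp (h hxy)
  rw [div_lt_div_iff₀ (add_pos_of_pos_of_nonneg (ha x) (hb x))
    (add_pos_of_pos_of_nonneg (ha y) (hb y))]
  linear_combination hlt

theorem paired_implies_conditional_general
    (k : ℕ) (p : ℕ → ℝ → ℝ)
    (hpos : ∀ r, r ≤ k → ∀ θ, 0 < p r θ)
    (hpaired : ∀ s r, s < r → r ≤ k → StrictMono (fun θ => p r θ / p s θ)) :
    ∀ r, 1 ≤ r → r ≤ k →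
      StrictMono (fun θ =>
        (∑ j ∈ Finset.Icc r k, p j θ) / (∑ j ∈ Finset.Icc (r - 1) k, p j θ)) := by
  intro r hr1 hrk
  obtain ⟨m, rfl⟩ : ∃ m, r = m + 1 := ⟨r - 1, by omega⟩
  have hsplit (θ : ℝ) : ∑ j ∈ Icc m k, p j θ = p m θ + ∑ j ∈ Icc (m + 1) k, p j θ := by
    rw [Icc_eq_cons_Ioc (by omega), sum_cons, Icc_add_one_left_eq_Ioc]
  simp only [Nat.add_sub_cancel, hsplit]
  refine strictMono_div_add_of_strictMono_div (hpos m (by omega))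
    (fun θ => sum_nonneg fun j hj => (hpos j (mem_Icc.mp hj).2 θ).le) ?_
  simp only [sum_div]
  exact strictMono_finset_sum ⟨m + 1, mem_Icc.mpr ⟨le_rfl, hrk⟩⟩
    fun j hj => hpaired m j (mem_Icc.mp hj).1 (mem_Icc.mp hj).2

/-- If an item response model is ordinal according to the paired
categories concept, then it is ordinal according to the conditional concept. -/
theorem paired_implies_conditional
    (k : ℕ) (p : ℕ → ℝ → ℝ)
    (hpos : ∀ r, r ≤ k → ∀ θ, 0 < p r θ)
    (hsum : ∀ θ, ∑ r ∈ Finset.range (k + 1), p r θ = 1)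
    (hpaired : ∀ s r, s < r → r ≤ k → StrictMono (fun θ => p r θ / p s θ)) :
    ∀ r, 1 ≤ r → r ≤ k →
      StrictMono (fun θ =>
        (∑ j ∈ Finset.Icc r k, p j θ) / (∑ j ∈ Finset.Icc (r - 1) k, p j θ)) :=
  paired_implies_conditional_general k p hpos hpaired
end

section
/- If an item response model is ordinal according to the conditional concept (for every r = 1,…,k the conditional probability P(Y ≥ r | Y ≥ r−1, θ) = (∑_{j=r}^{k} π_j(θ))/(∑_{j=r−1}^{k} π_j(θ)) is a strictly increasing function of θ), then it is ordinal according to the split concept (for every r = 1,…,k the cumulative probability P(Y ≥ r | θ) = ∑_{j=r}^{k} π_j(θ) is a strictly increasing function of θ). -/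
/-!
Write `S r θ = ∑_{j=r}^k p j θ`. Since `S 0 = 1`, the case `r = 1` is the conditional hypothesis
itself, and for `r ≥ 2` we have `S r = (S r / S (r-1)) * S (r-1)`, a product of a nonnegative
strictly increasing factor and a positive increasing one, so induction on `r` concludes.
-/

open Finset

lemma StrictMono.of_div {α 𝕜 : Type*} [Preorder α] [Semifield 𝕜] [LinearOrder 𝕜]
    [IsStrictOrderedRing 𝕜] {f g : α → 𝕜} (hfg : StrictMono fun x ↦ f x / g x)
    (hg : Monotone g) (hf₀ : ∀ x, 0 ≤ f x) (hg₀ : ∀ x, 0 < g x) : StrictMono f := by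
  convert hfg.mul_monotone hg (fun x ↦ div_nonneg (hf₀ x) (hg₀ x).le) hg₀ using 1
  funext x
  exact (div_mul_cancel₀ _ (hg₀ x).ne').symm

/-- If an item response model is ordinal according to the conditional
concept, then it is ordinal according to the split concept. -/
theorem conditional_implies_split
    (k : ℕ) (p : ℕ → ℝ → ℝ)
    (hpos : ∀ r, r ≤ k → ∀ θ, 0 < p r θ)
    (hsum : ∀ θ, ∑ r ∈ Finset.range (k + 1), p r θ = 1)
    (hcond : ∀ r, 1 ≤ r → r ≤ k →
      StrictMono (fun θ =>
        (∑ j ∈ Finset.Icc r k, p j θ) / (∑ j ∈ Finset.Icc (r - 1) k, p j θ))) :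
    ∀ r, 1 ≤ r → r ≤ k →
      StrictMono (fun θ => ∑ j ∈ Finset.Icc r k, p j θ) := by
  have tail_pos : ∀ r ≤ k, ∀ θ, 0 < ∑ j ∈ Icc r k, p j θ := fun r hr θ ↦
    sum_pos (fun j hj ↦ hpos j (mem_Icc.1 hj).2 θ) ⟨r, mem_Icc.2 ⟨le_rfl, hr⟩⟩
  have tail_zero : ∀ θ, ∑ j ∈ Icc 0 k, p j θ = 1 := fun θ ↦ by
    rw [← Nat.range_succ_eq_Icc_zero, hsum]
  intro r hr hrk
  induction r, hr using Nat.le_induction with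
  | base => simpa [tail_zero] using hcond 1 le_rfl hrk
  | succ n hn ih =>
    refine StrictMono.of_div (g := fun θ ↦ ∑ j ∈ Icc n k, p j θ) ?_ (ih (by omega)).monotone
      (fun θ ↦ (tail_pos _ hrk θ).le) (tail_pos n (by omega))
    simpa using hcond (n + 1) (by omega) hrk
end

section
/- If an item response model is ordinal according to the paired categories concept (for every pair of categories s < r the ratio π_r(θ)/π_s(θ) is a strictly increasing function of θ), then it is ordinal according to the split concept (for every r = 1,…,k the cumulative probability P(Y ≥ r | θ) = ∑_{j=r}^{k} π_j(θ) is a strictly increasing function of θ). -/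
/-! The ratio of the upper tail to the lower tail, `S / T` with `S = ∑_{j ≥ r} π_j` and
`T = ∑_{i < r} π_i`, is strictly increasing: after clearing denominators, the cross products
`S(θ₁) T(θ₂) < S(θ₂) T(θ₁)` expand into sums of the pairwise inequalities
`π_j(θ₁) π_i(θ₂) < π_j(θ₂) π_i(θ₁)` for `i < r ≤ j`. Since `T = 1 - S` and `t ↦ t / (1 - t)`
is strictly increasing on `t < 1`, `S` itself is strictly increasing. -/

open Finset

theorem StrictMono.mul_lt_mul_of_div {f g : ℝ → ℝ} (hg : ∀ θ, 0 < g θ)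
    (hfg : StrictMono fun θ => f θ / g θ) {x y : ℝ} (hxy : x < y) :
    f x * g y < f y * g x :=
  (div_lt_div_iff₀ (hg x) (hg y)).mp (hfg hxy)

theorem strictMono_sum_div_sum {ι : Type*} (p : ι → ℝ → ℝ) {A B : Finset ι}
    (hA : A.Nonempty) (hB : B.Nonempty) (hpos : ∀ i ∈ A, ∀ θ, 0 < p i θ)
    (hratio : ∀ i ∈ A, ∀ j ∈ B, StrictMono fun θ => p j θ / p i θ) :
    StrictMono fun θ => (∑ j ∈ B, p j θ) / ∑ i ∈ A, p i θ := by
  intro x y hxy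
  have hsum_pos : ∀ θ, 0 < ∑ i ∈ A, p i θ := fun θ => sum_pos (fun i hi => hpos i hi θ) hA
  rw [div_lt_div_iff₀ (hsum_pos x) (hsum_pos y), sum_mul_sum, sum_mul_sum]
  exact sum_lt_sum_of_nonempty hB fun j hj => sum_lt_sum_of_nonempty hA fun i hi =>
    (hratio i hi j hj).mul_lt_mul_of_div (hpos i hi) hxy

theorem strictMono_of_strictMono_div_one_sub {f : ℝ → ℝ} (hf : ∀ θ, f θ < 1)
    (h : StrictMono fun θ => f θ / (1 - f θ)) : StrictMono f := by
  intro x y hxy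
  have hcross := (div_lt_div_iff₀ (sub_pos.mpr (hf x)) (sub_pos.mpr (hf y))).mp (h hxy)
  nlinarith

theorem sum_range_add_sum_Icc (p : ℕ → ℝ) {r k : ℕ} (hrk : r ≤ k + 1) :
    ∑ i ∈ range r, p i + ∑ j ∈ Icc r k, p j = ∑ i ∈ range (k + 1), p i := by
  rw [← Ico_add_one_right_eq_Icc, range_eq_Ico, range_eq_Ico]
  exact sum_Ico_consecutive p (Nat.zero_le r) hrk

/-- If an item response model is ordinal according to the paired
categories concept, then it is ordinal according to the split concept. -/
theorem paired_implies_split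
    (k : ℕ) (p : ℕ → ℝ → ℝ)
    (hpos : ∀ r, r ≤ k → ∀ θ, 0 < p r θ)
    (hsum : ∀ θ, ∑ r ∈ Finset.range (k + 1), p r θ = 1)
    (hpaired : ∀ s r, s < r → r ≤ k → StrictMono (fun θ => p r θ / p s θ)) :
    ∀ r, 1 ≤ r → r ≤ k →
      StrictMono (fun θ => ∑ j ∈ Finset.Icc r k, p j θ) := by
  intro r hr1 hrk
  have hlower : ∀ θ, ∑ i ∈ range r, p i θ = 1 - ∑ j ∈ Icc r k, p j θ := fun θ => by
    rw [← hsum θ, ← sum_range_add_sum_Icc (p · θ) (r := r) (k := k) (by omega),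
      add_sub_cancel_right]
  have hratio : StrictMono fun θ => (∑ j ∈ Icc r k, p j θ) / ∑ i ∈ range r, p i θ :=
    strictMono_sum_div_sum p ⟨0, mem_range.mpr hr1⟩ ⟨r, mem_Icc.mpr ⟨le_rfl, hrk⟩⟩
      (fun i hi => hpos i (by grind)) fun i hi j hj => hpaired i j (by grind) (by grind)
  have hlower_pos : ∀ θ, 0 < ∑ i ∈ range r, p i θ := fun θ =>
    sum_pos (fun i hi => hpos i (by grind) θ) ⟨0, mem_range.mpr hr1⟩
  simp only [hlower] at hratio hlower_pos
  exact strictMono_of_strictMono_div_one_sub (fun θ => by linarith [hlower_pos θ]) hratio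
end

section
/- The partial credit model is ordinal according to the paired categories concept: for every pair of categories s < r, the ratio π_r(θ)/π_s(θ) is a strictly increasing function of θ; indeed π_r(θ)/π_s(θ) = exp((r−s)θ − (δ_{s+1} + ⋯ + δ_r)). -/
open Finset Real

/-! Dividing π_r by π_s cancels the common normalizer, leaving the exponential of the partial sum
∑_{l=s+1}^{r} (θ - δ_l) = (r - s) θ - ∑_{l=s+1}^{r} δ_l, which is affine in θ with positive slope. -/

lemma sum_Icc_one_sub_sum_Icc_one {M : Type*} [AddCommGroup M] (f : ℕ → M) {s r : ℕ}
    (hsr : s ≤ r) :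
    ∑ l ∈ Icc 1 r, f l - ∑ l ∈ Icc 1 s, f l = ∑ l ∈ Icc (s + 1) r, f l := by
  have split := sum_Ioc_consecutive f s.zero_le hsr
  simp only [← Icc_add_one_left_eq_Ioc, zero_add] at split
  rw [← split, add_sub_cancel_left]

lemma sum_Icc_const_sub (θ : ℝ) (δ : ℕ → ℝ) {s r : ℕ} (hsr : s ≤ r) :
    ∑ l ∈ Icc (s + 1) r, (θ - δ l) = ((r : ℝ) - s) * θ - ∑ l ∈ Icc (s + 1) r, δ l := by
  rw [sum_sub_distrib, sum_const, Nat.card_Icc, nsmul_eq_mul, Nat.add_sub_add_right,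
    Nat.cast_sub hsr]

lemma strictMono_exp_mul_sub {c : ℝ} (hc : 0 < c) (d : ℝ) :
    StrictMono fun θ : ℝ => exp (c * θ - d) :=
  exp_strictMono.comp fun _ _ h => sub_lt_sub_right (mul_lt_mul_of_pos_left h hc) d

/-- The partial credit model is ordinal according to the paired
categories concept; indeed π_r(θ)/π_s(θ) = exp((r−s)θ − (δ_{s+1}+⋯+δ_r)). -/
theorem pcm_paired_categories
    (k : ℕ) (δ : ℕ → ℝ) (p : ℕ → ℝ → ℝ)
    (hp : ∀ r, r ≤ k → ∀ θ, p r θ =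
      Real.exp (∑ l ∈ Finset.Icc 1 r, (θ - δ l)) /
        ∑ s ∈ Finset.range (k + 1), Real.exp (∑ l ∈ Finset.Icc 1 s, (θ - δ l))) :
    ∀ s r, s < r → r ≤ k →
      StrictMono (fun θ => p r θ / p s θ) ∧
        ∀ θ, p r θ / p s θ =
          Real.exp (((r : ℝ) - (s : ℝ)) * θ - ∑ l ∈ Finset.Icc (s + 1) r, δ l) := by
  intro s r hsr hrk
  have ratio : ∀ θ, p r θ / p s θ =
      exp (((r : ℝ) - (s : ℝ)) * θ - ∑ l ∈ Icc (s + 1) r, δ l) := fun θ => by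
    have normalizer_pos : 0 < ∑ t ∈ range (k + 1), exp (∑ l ∈ Icc 1 t, (θ - δ l)) :=
      sum_pos (fun t _ => exp_pos _) nonempty_range_add_one
    rw [hp r hrk θ, hp s (hsr.le.trans hrk) θ, div_div_div_cancel_right₀ normalizer_pos.ne',
      ← exp_sub, sum_Icc_one_sub_sum_Icc_one _ hsr.le, sum_Icc_const_sub θ δ hsr.le]
  refine ⟨?_, ratio⟩
  simpa only [ratio] using strictMono_exp_mul_sub (sub_pos.2 (Nat.cast_lt.2 hsr)) _
end

section
/- The logistic cumulative model (graded response model with logistic link) is ordinal according to the paired categories concept: for every pair of categories s < r, the ratio π_r(θ)/π_s(θ) is a strictly increasing function of θ. -/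
/-!
With `σ_r(θ) = σ(θ - δ_r)`, `σ_0 = 1` and `σ_{k+1} = 0`, every `σ_r` solves the logistic equation
`y' = y (1 - y)`, hence `π_r = σ_r - σ_{r+1}` has logarithmic derivative `1 - σ_r - σ_{r+1}`.
This is strictly increasing in `r` because `σ_r` is strictly decreasing in `r`, so for `s < r`
the logarithmic derivative of `π_r / π_s` is positive.
-/

open Real

lemma Real.exp_div_one_add_exp (x : ℝ) : exp x / (1 + exp x) = sigmoid x := by
  rw [sigmoid_def, exp_neg]
  field_simp
  ring

theorem strictMono_div_of_hasDerivAt {f g a b : ℝ → ℝ}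
    (hf : ∀ x, HasDerivAt f (f x * a x) x) (hg : ∀ x, HasDerivAt g (g x * b x) x)
    (hf0 : ∀ x, 0 < f x) (hg0 : ∀ x, 0 < g x) (hab : ∀ x, b x < a x) :
    StrictMono fun x => f x / g x := by
  refine strictMono_of_hasDerivAt_pos (fun x => (hf x).div (hg x) (hg0 x).ne') fun x => ?_
  have hnum : f x * a x * g x - f x * (g x * b x) = f x * g x * (a x - b x) := by ring
  have := hf0 x; have := hg0 x; have := sub_pos.2 (hab x)
  rw [hnum]
  positivity

lemma HasDerivAt.sub_of_logistic {F G : ℝ → ℝ} {x : ℝ}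
    (hF : HasDerivAt F (F x * (1 - F x)) x) (hG : HasDerivAt G (G x * (1 - G x)) x) :
    HasDerivAt (fun y => F y - G y) ((F x - G x) * (1 - F x - G x)) x :=
  (hF.sub hG).congr_deriv (by ring)

/-- `P(Y ≥ r | θ)` in the graded response model, extended by `1` at `r = 0` and by `0` for
`r > k`. -/
noncomputable def gradedCumulative (k : ℕ) (δ : ℕ → ℝ) (r : ℕ) (θ : ℝ) : ℝ :=
  if r = 0 then 1 else if r ≤ k then sigmoid (θ - δ r) else 0

noncomputable def gradedCategoryProb (k : ℕ) (δ : ℕ → ℝ) (r : ℕ) (θ : ℝ) : ℝ :=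
  gradedCumulative k δ r θ - gradedCumulative k δ (r + 1) θ

namespace gradedCumulative

variable {k : ℕ} {δ : ℕ → ℝ}

lemma hasDerivAt (r : ℕ) (θ : ℝ) :
    HasDerivAt (gradedCumulative k δ r)
      (gradedCumulative k δ r θ * (1 - gradedCumulative k δ r θ)) θ := by
  unfold gradedCumulative
  split_ifs
  · simpa using hasDerivAt_const θ (1 : ℝ)
  · simpa [Function.comp_def] using (hasDerivAt_sigmoid (θ - δ r)).comp θ ((hasDerivAt_id θ).sub_const (δ r))
  · simpa using hasDerivAt_const θ (0 : ℝ)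

lemma lt_of_lt (hδ : ∀ i j, 1 ≤ i → i < j → j ≤ k → δ i < δ j) ⦃r r' : ℕ⦄ (hrr' : r < r')
    (hr' : r' ≤ k + 1) (θ : ℝ) : gradedCumulative k δ r' θ < gradedCumulative k δ r θ := by
  unfold gradedCumulative
  split_ifs <;> first
    | omega
    | exact sigmoid_lt_one _
    | exact sigmoid_pos _
    | exact one_pos
    | exact sigmoid_lt (sub_lt_sub_left (hδ r r' (by omega) hrr' (by omega)) θ)

end gradedCumulative

theorem gradedCategoryProb_div_strictMono {k : ℕ} {δ : ℕ → ℝ}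
    (hδ : ∀ i j, 1 ≤ i → i < j → j ≤ k → δ i < δ j) {s r : ℕ} (hsr : s < r) (hrk : r ≤ k) :
    StrictMono fun θ => gradedCategoryProb k δ r θ / gradedCategoryProb k δ s θ := by
  have hlt := gradedCumulative.lt_of_lt hδ (k := k)
  refine strictMono_div_of_hasDerivAt
    (fun θ => (gradedCumulative.hasDerivAt r θ).sub_of_logistic
      (gradedCumulative.hasDerivAt (r + 1) θ))
    (fun θ => (gradedCumulative.hasDerivAt s θ).sub_of_logistic
      (gradedCumulative.hasDerivAt (s + 1) θ))
    (fun θ => sub_pos.2 (hlt (Nat.lt_succ_self r) (by omega) θ))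
    (fun θ => sub_pos.2 (hlt (Nat.lt_succ_self s) (by omega) θ)) fun θ => ?_
  have := hlt hsr (by omega) θ
  have := hlt (Nat.succ_lt_succ hsr) (by omega) θ
  linarith

theorem logistic_cumulative_paired_categories_general
    (k : ℕ) (δ : ℕ → ℝ)
    (hδ : ∀ i j, 1 ≤ i → i < j → j ≤ k → δ i < δ j)
    (p : ℕ → ℝ → ℝ)
    (hp0 : ∀ θ, p 0 θ = 1 - Real.exp (θ - δ 1) / (1 + Real.exp (θ - δ 1)))
    (hpr : ∀ r, 1 ≤ r → r < k → ∀ θ,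
      p r θ = Real.exp (θ - δ r) / (1 + Real.exp (θ - δ r)) -
        Real.exp (θ - δ (r + 1)) / (1 + Real.exp (θ - δ (r + 1))))
    (hpk : ∀ θ, p k θ = Real.exp (θ - δ k) / (1 + Real.exp (θ - δ k))) :
    ∀ s r, s < r → r ≤ k → StrictMono (fun θ => p r θ / p s θ) := by
  intro s r hsr hrk
  have hp : ∀ j ≤ k, p j = gradedCategoryProb k δ j := by
    intro j hjk
    funext θ
    simp only [gradedCategoryProb, gradedCumulative, exp_div_one_add_exp] at hp0 hpr hpk ⊢
    rcases Nat.eq_zero_or_pos j with rfl | hj1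
    · simp [hp0, show 1 ≤ k by omega]
    rcases hjk.lt_or_eq with hjk | rfl
    · simp [hpr j hj1 hjk, hjk, hjk.le, hj1.ne']
    · simp [hpk, hj1.ne']
  rw [hp r hrk, hp s (by omega)]
  exact gradedCategoryProb_div_strictMono hδ hsr hrk

/-- The logistic cumulative (graded response) model is ordinal
according to the paired categories concept. -/
theorem logistic_cumulative_paired_categories
    (k : ℕ) (hk : 1 ≤ k) (δ : ℕ → ℝ)
    (hδ : ∀ i j, 1 ≤ i → i < j → j ≤ k → δ i < δ j)
    (p : ℕ → ℝ → ℝ)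
    (hp0 : ∀ θ, p 0 θ = 1 - Real.exp (θ - δ 1) / (1 + Real.exp (θ - δ 1)))
    (hpr : ∀ r, 1 ≤ r → r < k → ∀ θ,
      p r θ = Real.exp (θ - δ r) / (1 + Real.exp (θ - δ r)) -
        Real.exp (θ - δ (r + 1)) / (1 + Real.exp (θ - δ (r + 1))))
    (hpk : ∀ θ, p k θ = Real.exp (θ - δ k) / (1 + Real.exp (θ - δ k))) :
    ∀ s r, s < r → r ≤ k → StrictMono (fun θ => p r θ / p s θ) :=
  logistic_cumulative_paired_categories_general k δ hδ p hp0 hpr hpk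
end

section
/- The general adjacent categories model is ordinal according to the paired categories concept: if for every r = 1,…,k the conditional probability π_r(θ)/(π_{r−1}(θ)+π_r(θ)) equals F(θ − δ_r) for a strictly increasing distribution function F : ℝ → (0,1), then for every pair of categories s < r the ratio π_r(θ)/π_s(θ) is a strictly increasing function of θ. -/
/-!
The conditional probability `q = π_r / (π_{r-1} + π_r) = F (θ - δ_r)` is strictly increasing in `θ`,
hence so is the odds ratio `π_r / π_{r-1} = (q⁻¹ - 1)⁻¹`. For `s < r` the ratio `π_r / π_s`
telescopes into the product of the adjacent odds ratios `π_{i+1} / π_i`, `s ≤ i < r`, and a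
product of positive strictly increasing functions is strictly increasing.
-/

variable {α 𝕜 : Type*} [Preorder α] [Field 𝕜] [LinearOrder 𝕜] [IsStrictOrderedRing 𝕜]

theorem strictMono_div_of_strictMono_div_add {a b : α → 𝕜} (ha : ∀ x, 0 < a x)
    (hb : ∀ x, 0 < b x) (h : StrictMono fun x => b x / (a x + b x)) :
    StrictMono fun x => b x / a x := by
  intro x y hxy
  have hodds : ∀ z, a z / b z = (b z / (a z + b z))⁻¹ - 1 := fun z => by
    have := (ha z).ne'
    have := (hb z).ne'
    field_simp
    ring
  have hq : ∀ z, 0 < b z / (a z + b z) := fun z => div_pos (hb z) (add_pos (ha z) (hb z))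
  have hinv : a y / b y < a x / b x := by
    rw [hodds, hodds]
    exact sub_lt_sub_right ((inv_lt_inv₀ (hq y) (hq x)).2 (h hxy)) 1
  simpa only [inv_div] using (inv_lt_inv₀ (div_pos (ha x) (hb x)) (div_pos (ha y) (hb y))).2 hinv

theorem strictMono_div_of_strictMono_succ_div {p : ℕ → α → 𝕜} {s r : ℕ} (hsr : s < r)
    (hpos : ∀ i, s ≤ i → i ≤ r → ∀ x, 0 < p i x)
    (hstep : ∀ i, s ≤ i → i < r → StrictMono fun x => p (i + 1) x / p i x) :
    StrictMono fun x => p r x / p s x := by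
  induction r, hsr using Nat.le_induction with
  | base => exact hstep s le_rfl (Nat.lt_succ_self s)
  | succ n hsn ih =>
    replace hsn : s < n := hsn
    have hs : ∀ x, 0 < p s x := hpos s le_rfl (by omega)
    have hn : ∀ x, 0 < p n x := hpos n hsn.le (Nat.le_succ n)
    have hn1 : ∀ x, 0 < p (n + 1) x := hpos (n + 1) (by omega) le_rfl
    have hfactor : (fun x => p (n + 1) x / p s x) =
        (fun x => p (n + 1) x / p n x) * fun x => p n x / p s x :=
      funext fun x => (div_mul_div_cancel₀ (hn x).ne').symm
    rw [hfactor]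
    exact (hstep n hsn.le (Nat.lt_succ_self n)).mul
      (ih (fun i hi hin => hpos i hi (hin.trans (Nat.le_succ n)))
        (fun i hi hin => hstep i hi (hin.trans (Nat.lt_succ_self n))))
      (fun x => (div_pos (hn1 x) (hn x)).le) (fun x => (div_pos (hn x) (hs x)).le)

theorem adjacent_categories_paired_general
    (k : ℕ) (p : ℕ → ℝ → ℝ) (δ : ℕ → ℝ) (F : ℝ → ℝ)
    (hpos : ∀ r, r ≤ k → ∀ θ, 0 < p r θ)
    (hFmono : StrictMono F)
    (hmodel : ∀ r, 1 ≤ r → r ≤ k → ∀ θ,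
      p r θ / (p (r - 1) θ + p r θ) = F (θ - δ r)) :
    ∀ s r, s < r → r ≤ k → StrictMono (fun θ => p r θ / p s θ) := by
  intro s r hsr hrk
  refine strictMono_div_of_strictMono_succ_div hsr (fun i _ hir => hpos i (hir.trans hrk))
    fun i _ hir => ?_
  have hik : i + 1 ≤ k := by omega
  have hcond : (fun θ => p (i + 1) θ / (p i θ + p (i + 1) θ)) = fun θ => F (θ - δ (i + 1)) :=
    funext (hmodel (i + 1) (Nat.le_add_left 1 i) hik)
  refine strictMono_div_of_strictMono_div_add (hpos i (by omega)) (hpos (i + 1) hik) ?_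
  rw [hcond]
  exact hFmono.comp fun _ _ h => sub_lt_sub_right h _

/-- The general adjacent categories model is ordinal according to the
paired categories concept. -/
theorem adjacent_categories_paired
    (k : ℕ) (p : ℕ → ℝ → ℝ) (δ : ℕ → ℝ) (F : ℝ → ℝ)
    (hpos : ∀ r, r ≤ k → ∀ θ, 0 < p r θ)
    (hsum : ∀ θ, ∑ r ∈ Finset.range (k + 1), p r θ = 1)
    (hFmono : StrictMono F)
    (hFrange : ∀ x, F x ∈ Set.Ioo (0 : ℝ) 1)
    (hmodel : ∀ r, 1 ≤ r → r ≤ k → ∀ θ,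
      p r θ / (p (r - 1) θ + p r θ) = F (θ - δ r)) :
    ∀ s r, s < r → r ≤ k → StrictMono (fun θ => p r θ / p s θ) :=
  adjacent_categories_paired_general k p δ F hpos hFmono hmodel
end

section
/- In the four-category IR-tree model with category probabilities π_0 = (1 − F(θ − δ⁽¹⁾))(1 − F(θ⁽²⁾ − δ⁽²⁾)), π_1 = (1 − F(θ − δ⁽¹⁾))F(θ⁽²⁾ − δ⁽²⁾), π_2 = F(θ − δ⁽¹⁾)(1 − F(θ⁽³⁾ − δ⁽³⁾)), π_3 = F(θ − δ⁽¹⁾)F(θ⁽³⁾ − δ⁽³⁾), the ratio π_1/π_0 = F(θ⁽²⁾ − δ⁽²⁾)/(1 − F(θ⁽²⁾ − δ⁽²⁾)) does not depend on θ; in particular, for fixed θ⁽²⁾, θ⁽³⁾ the map θ ↦ π_1/π_0 is constant and hence not strictly increasing, so the model is not ordinal in the trait θ according to the paired categories concept. -/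
theorem not_strictMono_of_forall_eq {α β : Type*} [LinearOrder α] [Nontrivial α] [Preorder β]
    {f : α → β} {c : β} (hf : ∀ x, f x = c) : ¬ StrictMono f := fun hmono => by
  obtain ⟨x, y, hxy⟩ := exists_pair_ne α
  exact hxy (hmono.injective ((hf x).trans (hf y).symm))

theorem irtree_not_ordinal_general
    (F : ℝ → ℝ)
    (hFrange : ∀ x, F x ∈ Set.Ioo (0 : ℝ) 1)
    (θ2 δ1 δ2 : ℝ) (p : ℕ → ℝ → ℝ)
    (hp0 : ∀ θ, p 0 θ = (1 - F (θ - δ1)) * (1 - F (θ2 - δ2)))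
    (hp1 : ∀ θ, p 1 θ = (1 - F (θ - δ1)) * F (θ2 - δ2)) :
    (∀ θ, p 1 θ / p 0 θ = F (θ2 - δ2) / (1 - F (θ2 - δ2))) ∧
      ¬ StrictMono (fun θ => p 1 θ / p 0 θ) := by
  have hratio : ∀ θ, p 1 θ / p 0 θ = F (θ2 - δ2) / (1 - F (θ2 - δ2)) := fun θ => by
    have hfirst : 1 - F (θ - δ1) ≠ 0 := sub_ne_zero.2 (hFrange _).2.ne'
    rw [hp0, hp1, mul_div_mul_left _ _ hfirst]
  exact ⟨hratio, not_strictMono_of_forall_eq hratio⟩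

/-- In the four-category IR-tree model the ratio π_1/π_0 does not
depend on θ; in particular it is constant in θ and hence not strictly increasing,
so the model is not ordinal in θ according to the paired categories concept. -/
theorem irtree_not_ordinal
    (F : ℝ → ℝ)
    (hFmono : StrictMono F)
    (hFrange : ∀ x, F x ∈ Set.Ioo (0 : ℝ) 1)
    (θ2 θ3 δ1 δ2 δ3 : ℝ) (p : ℕ → ℝ → ℝ)
    (hp0 : ∀ θ, p 0 θ = (1 - F (θ - δ1)) * (1 - F (θ2 - δ2)))
    (hp1 : ∀ θ, p 1 θ = (1 - F (θ - δ1)) * F (θ2 - δ2))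
    (hp2 : ∀ θ, p 2 θ = F (θ - δ1) * (1 - F (θ3 - δ3)))
    (hp3 : ∀ θ, p 3 θ = F (θ - δ1) * F (θ3 - δ3)) :
    (∀ θ, p 1 θ / p 0 θ = F (θ2 - δ2) / (1 - F (θ2 - δ2))) ∧
      ¬ StrictMono (fun θ => p 1 θ / p 0 θ) :=
  irtree_not_ordinal_general F hFrange θ2 δ1 δ2 p hp0 hp1
end

section
/- The partial credit model with response style (PCMRS) with k = 4 categories 0,…,4 and middle category m = 2 is not ordinal in the response-style dimension θ₂: for fixed θ₁, the ratio π_1(θ₁, θ₂)/π_0(θ₁, θ₂) = exp(θ₁ + 1.5θ₂ − δ_1) is a strictly increasing function of θ₂, while the ratio π_4(θ₁, θ₂)/π_3(θ₁, θ₂) = exp(θ₁ − 1.5θ₂ − δ_4) is a strictly decreasing function of θ₂. -/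
/-! The normalising constant cancels in `π_{r+1} / π_r`, leaving the exponential of the
adjacent-category logit `θ₁ + (m - r - 0.5) θ₂ - δ_{r+1}`. Its slope in `θ₂` is `+1.5` for the
lowest pair of categories and `-1.5` for the highest pair. -/

open Finset Real

theorem exp_partialSum_div_exp_partialSum (η : ℕ → ℝ) {Z : ℝ} (hZ : Z ≠ 0) (r : ℕ) :
    exp (∑ l ∈ Icc 1 (r + 1), η l) / Z / (exp (∑ l ∈ Icc 1 r, η l) / Z) = exp (η (r + 1)) := by
  rw [div_div_div_cancel_right₀ hZ, sum_Icc_succ_top (by omega), exp_add,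
    mul_div_cancel_left₀ _ (exp_pos _).ne']

/-- The PCMRS with k = 4 and middle category m = 2 is not ordinal in
the response-style dimension θ₂: π_1/π_0 = exp(θ₁ + 1.5θ₂ − δ_1) is strictly
increasing in θ₂ while π_4/π_3 = exp(θ₁ − 1.5θ₂ − δ_4) is strictly decreasing. -/
theorem pcmrs_not_ordinal_in_second_dimension
    (δ : ℕ → ℝ) (p : ℕ → ℝ → ℝ → ℝ)
    (hp : ∀ r, r ≤ 4 → ∀ θ1 θ2 : ℝ, p r θ1 θ2 =
      Real.exp (∑ l ∈ Finset.Icc 1 r, (θ1 + ((2 : ℝ) - (l : ℝ) + 0.5) * θ2 - δ l)) /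
        ∑ s ∈ Finset.range 5,
          Real.exp (∑ l ∈ Finset.Icc 1 s, (θ1 + ((2 : ℝ) - (l : ℝ) + 0.5) * θ2 - δ l))) :
    ∀ θ1 : ℝ,
      (∀ θ2 : ℝ, p 1 θ1 θ2 / p 0 θ1 θ2 = Real.exp (θ1 + 1.5 * θ2 - δ 1)) ∧
      StrictMono (fun θ2 => p 1 θ1 θ2 / p 0 θ1 θ2) ∧
      (∀ θ2 : ℝ, p 4 θ1 θ2 / p 3 θ1 θ2 = Real.exp (θ1 - 1.5 * θ2 - δ 4)) ∧
      StrictAnti (fun θ2 => p 4 θ1 θ2 / p 3 θ1 θ2) := by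
  intro θ1
  have adjacent (r : ℕ) (hr : r < 4) (θ2 : ℝ) : p (r + 1) θ1 θ2 / p r θ1 θ2 =
      exp (θ1 + ((2 : ℝ) - ((r + 1 : ℕ) : ℝ) + 0.5) * θ2 - δ (r + 1)) := by
    rw [hp (r + 1) hr θ1 θ2, hp r hr.le θ1 θ2]
    exact exp_partialSum_div_exp_partialSum _
      (sum_pos (fun _ _ => exp_pos _) ⟨0, by simp⟩).ne' r
  have ratio10 (θ2 : ℝ) : p 1 θ1 θ2 / p 0 θ1 θ2 = exp (θ1 + 1.5 * θ2 - δ 1) := by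
    rw [adjacent 0 (by norm_num)]; norm_num
  have ratio43 (θ2 : ℝ) : p 4 θ1 θ2 / p 3 θ1 θ2 = exp (θ1 - 1.5 * θ2 - δ 4) := by
    rw [adjacent 3 (by norm_num)]; congr 1; push_cast; ring
  refine ⟨ratio10, ?_, ratio43, ?_⟩
  · simp only [ratio10]
    exact exp_strictMono.comp fun a b h => by linarith
  · simp only [ratio43]
    exact exp_strictMono.comp_strictAnti fun a b h => by linarith
end
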